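/- Let P be the group presented by generators x, y, z and relators w₁ = z⁻¹x⁻¹yz⁻¹xz⁻¹yx⁻¹z⁻¹, w₂ = z⁻¹x⁻¹yz⁻¹yz⁻¹yx⁻¹z⁻¹x, w₃ = z⁻¹x⁻¹yz⁻¹yx⁻¹z⁻¹y, w₄ = zxy⁻¹zx⁻¹zy⁻¹xz, w₅ = zxy⁻¹zy⁻¹zy⁻¹xzx⁻¹, w₆ = zxy⁻¹zy⁻¹xzy⁻¹. Then there exists a group homomorphism ρ : P → SL(2,ℂ) with tr ρ(x) = −1, tr ρ(y) = 1 and tr ρ(z) = −1. -/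

import Mathlib

open Matrix

/-- `SL(2,ℂ)`. -/
abbrev SL2C := Matrix.SpecialLinearGroup (Fin 2) ℂ

/-- The trace of an element of `SL(2,ℂ)`. -/
noncomputable def trSL2 (A : SL2C) : ℂ := Matrix.trace (A : Matrix (Fin 2) (Fin 2) ℂ)

namespace T45Cover

/-- The free generators `x, y, z`. -/
def x : FreeGroup (Fin 3) := FreeGroup.of 0
def y : FreeGroup (Fin 3) := FreeGroup.of 1
def z : FreeGroup (Fin 3) := FreeGroup.of 2

/-- The six relators `w₁, …, w₆` of the presentation of `π₁(Σ₂T₄,₅)`. -/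
def rels : Set (FreeGroup (Fin 3)) :=
  { z⁻¹ * x⁻¹ * y * z⁻¹ * x * z⁻¹ * y * x⁻¹ * z⁻¹,
    z⁻¹ * x⁻¹ * y * z⁻¹ * y * z⁻¹ * y * x⁻¹ * z⁻¹ * x,
    z⁻¹ * x⁻¹ * y * z⁻¹ * y * x⁻¹ * z⁻¹ * y,
    z * x * y⁻¹ * z * x⁻¹ * z * y⁻¹ * x * z,
    z * x * y⁻¹ * z * y⁻¹ * z * y⁻¹ * x * z * x⁻¹,
    z * x * y⁻¹ * z * y⁻¹ * x * z * y⁻¹ }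

/-- The group `P = ⟨x, y, z ∣ w₁, …, w₆⟩`. -/
abbrev P := PresentedGroup rels

end T45Cover

/-!
Send `x`, `y`, `z` to explicit matrices over `ℚ(√-3, √-15)`: `X` is diagonal with the primitive
cube roots of unity as eigenvalues, so `tr X = -1`, and `tr Y = 1`, `tr Z = -1` are read off the
diagonals. Half of the six relators are redundant, and each remaining one becomes an entrywise
polynomial identity modulo `a² = -3`, `b² = -15`.
-/

namespace T45Cover

open scoped MatrixGroups

section Presentation

variable {G : Type*} [Group G]

/-- The hypotheses are `w₁ = 1`, `w₂ = 1`, `w₃ = 1`, each cut into two halves; the other relators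
follow because `w₄ = w₁⁻¹` while `w₅` and `w₆` are conjugates of `w₂⁻¹` and `w₃⁻¹`. -/
theorem lift_rels_eq_one {X Y Z : G}
    (h₁ : Z⁻¹ * X⁻¹ * Y * Z⁻¹ * X = Z * X * Y⁻¹ * Z)
    (h₂ : Z⁻¹ * X⁻¹ * Y * Z⁻¹ * Y = X⁻¹ * Z * X * Y⁻¹ * Z)
    (h₃ : Z⁻¹ * X⁻¹ * Y * Z⁻¹ = Y⁻¹ * Z * X * Y⁻¹) :
    ∀ r ∈ rels, FreeGroup.lift ![X, Y, Z] r = 1 := by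
  have w₁ : Z⁻¹ * X⁻¹ * Y * Z⁻¹ * X * Z⁻¹ * Y * X⁻¹ * Z⁻¹ = 1 := by
    rw [h₁]; group
  have w₂ : Z⁻¹ * X⁻¹ * Y * Z⁻¹ * Y * Z⁻¹ * Y * X⁻¹ * Z⁻¹ * X = 1 := by
    rw [h₂]; group
  have w₃ : Z⁻¹ * X⁻¹ * Y * Z⁻¹ * Y * X⁻¹ * Z⁻¹ * Y = 1 := by
    rw [h₃]; group
  simp only [rels, Set.mem_insert_iff, Set.mem_singleton_iff]
  rintro r (rfl | rfl | rfl | rfl | rfl | rfl) <;>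
    simp only [x, y, z, map_mul, map_inv, FreeGroup.lift_apply_of, cons_val, cons_val_zero,
      cons_val_one]
  · exact w₁
  · exact w₂
  · exact w₃
  · simpa [mul_assoc] using congrArg (·⁻¹) w₁
  · simpa [mul_assoc] using congrArg (fun t ↦ X * t⁻¹ * X⁻¹) w₂
  · simpa [mul_assoc] using congrArg (fun t ↦ Y * t⁻¹ * Y⁻¹) w₃

end Presentation

section Matrices

variable {K : Type*} [Field K] [CharZero K] {a b : K}

/-- The images of `x`, `y`, `z`, with `a = √-3` and `b = √-15`. -/
def matX (ha : a ^ 2 = -3) : SL(2, K) :=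
  ⟨!![(-1 + a) / 2, 0; 0, (-1 - a) / 2], by rw [det_fin_two_of]; grind⟩

def matY (ha : a ^ 2 = -3) : SL(2, K) :=
  ⟨!![(3 - a) / 6, 1; -2 / 3, (3 + a) / 6], by rw [det_fin_two_of]; grind⟩

def matZ (ha : a ^ 2 = -3) (hb : b ^ 2 = -15) : SL(2, K) :=
  ⟨!![(-3 + a) / 6, (-1 - b) / 4; (1 - b) / 6, (-3 - a) / 6], by rw [det_fin_two_of]; grind⟩

variable (ha : a ^ 2 = -3) (hb : b ^ 2 = -15)

lemma coe_matX : (matX ha : Matrix (Fin 2) (Fin 2) K) = !![(-1 + a) / 2, 0; 0, (-1 - a) / 2] :=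
  rfl

lemma coe_matY : (matY ha : Matrix (Fin 2) (Fin 2) K) = !![(3 - a) / 6, 1; -2 / 3, (3 + a) / 6] :=
  rfl

lemma coe_matZ : (matZ ha hb : Matrix (Fin 2) (Fin 2) K) =
    !![(-3 + a) / 6, (-1 - b) / 4; (1 - b) / 6, (-3 - a) / 6] :=
  rfl

theorem lift_matXYZ_rels_eq_one :
    ∀ r ∈ rels, FreeGroup.lift ![matX ha, matY ha, matZ ha hb] r = 1 := by
  apply lift_rels_eq_one <;>
  · simp only [Matrix.SpecialLinearGroup.ext_iff, Matrix.SpecialLinearGroup.coe_mul,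
      Matrix.SpecialLinearGroup.coe_inv, coe_matX, coe_matY, coe_matZ, adjugate_fin_two_of,
      mul_fin_two, Fin.forall_fin_two, of_apply, cons_val_zero, cons_val_one]
    grind

def repSL : P →* SL(2, K) :=
  PresentedGroup.toGroup (lift_matXYZ_rels_eq_one ha hb)

theorem trace_repSL_x :
    trace (repSL ha hb (PresentedGroup.of 0) : Matrix (Fin 2) (Fin 2) K) = -1 := by
  simp only [repSL, PresentedGroup.toGroup.of, cons_val_zero, coe_matX, trace_fin_two_of]
  ring

theorem trace_repSL_y :
    trace (repSL ha hb (PresentedGroup.of 1) : Matrix (Fin 2) (Fin 2) K) = 1 := by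
  simp only [repSL, PresentedGroup.toGroup.of, cons_val_one, cons_val_zero, coe_matY,
    trace_fin_two_of]
  ring

theorem trace_repSL_z :
    trace (repSL ha hb (PresentedGroup.of 2) : Matrix (Fin 2) (Fin 2) K) = -1 := by
  simp only [repSL, PresentedGroup.toGroup.of, cons_val, coe_matZ, trace_fin_two_of]
  ring

end Matrices

end T45Cover

theorem stmt1 :
    ∃ ρ : T45Cover.P →* SL2C,
      trSL2 (ρ (PresentedGroup.of 0)) = -1 ∧
      trSL2 (ρ (PresentedGroup.of 1)) = 1 ∧
      trSL2 (ρ (PresentedGroup.of 2)) = -1 := by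
  obtain ⟨a, ha⟩ := IsAlgClosed.exists_pow_nat_eq (-3 : ℂ) two_pos
  obtain ⟨b, hb⟩ := IsAlgClosed.exists_pow_nat_eq (-15 : ℂ) two_pos
  exact ⟨T45Cover.repSL ha hb, T45Cover.trace_repSL_x ha hb, T45Cover.trace_repSL_y ha hb,
    T45Cover.trace_repSL_z ha hb⟩
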